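/- arXiv:2603.04332 — 6 statements merged into one kernel-verified Lean document; each statement's English description precedes it below -/
import Mathlib

section
/- The supremum over density operators ρ of |⟨A→B⟩_ρ^op| is at most the supremum over density operators ρ of |tr[ρ (α AB + (1−α) BA)]|, for any real α. -/
/-!
Dephase a state `ρ` in the eigenbasis of `A`: `σ = ∑ i, P i ρ P i` is again a state and commutes
with `A`, so by cyclicity `tr[σ (α AB + (1 - α) BA)] = tr[σ A B]`, and `tr[σ A B]` is exactly the
operational correlation of `ρ`. Thus every operational value is an algebraic one. The algebraic
values are bounded because the entries of a density matrix have modulus at most `1`.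
-/

open Matrix
open scoped ComplexOrder

namespace Matrix.PosSemidef

variable {n 𝕜 : Type*} [RCLike 𝕜] {ρ : Matrix n n 𝕜}

lemma norm_apply_sq_le (hρ : ρ.PosSemidef) (k l : n) :
    ‖ρ k l‖ ^ 2 ≤ RCLike.re (ρ k k) * RCLike.re (ρ l l) := by
  classical
  have hdet := (hρ.submatrix ![k, l]).det_nonneg
  rw [det_fin_two] at hdet
  simp only [submatrix_apply, Matrix.cons_val_zero, Matrix.cons_val_one,
    ← hρ.1.apply l k] at hdet
  have hk := (RCLike.nonneg_iff.mp (hρ.diag_nonneg (i := k))).2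
  have hl := (RCLike.nonneg_iff.mp (hρ.diag_nonneg (i := l))).2
  simpa only [RCLike.star_def, RCLike.mul_conj, map_sub, RCLike.mul_re, hk, hl, mul_zero,
    sub_zero, RCLike.re_ofReal_pow, sub_nonneg] using (RCLike.nonneg_iff.mp hdet).1

variable [Fintype n]

lemma re_apply_le_re_trace (hρ : ρ.PosSemidef) (k : n) :
    RCLike.re (ρ k k) ≤ RCLike.re ρ.trace := by
  rw [trace, map_sum]
  exact Finset.single_le_sum (f := fun i => RCLike.re (ρ i i))
    (fun i _ => (RCLike.nonneg_iff.mp hρ.diag_nonneg).1) (Finset.mem_univ k)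

lemma norm_apply_le_re_trace (hρ : ρ.PosSemidef) (k l : n) :
    ‖ρ k l‖ ≤ RCLike.re ρ.trace := by
  have htr : 0 ≤ RCLike.re ρ.trace := (RCLike.nonneg_iff.mp hρ.trace_nonneg).1
  refine abs_le_of_sq_le_sq' ?_ htr |>.2
  calc ‖ρ k l‖ ^ 2 ≤ RCLike.re (ρ k k) * RCLike.re (ρ l l) := hρ.norm_apply_sq_le k l
    _ ≤ RCLike.re ρ.trace * RCLike.re ρ.trace :=
      mul_le_mul (hρ.re_apply_le_re_trace k) (hρ.re_apply_le_re_trace l)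
        (RCLike.nonneg_iff.mp hρ.diag_nonneg).1 htr
    _ = RCLike.re ρ.trace ^ 2 := (sq _).symm

lemma norm_trace_mul_le (hρ : ρ.PosSemidef) (M : Matrix n n 𝕜) :
    ‖(ρ * M).trace‖ ≤ RCLike.re ρ.trace * ∑ k, ∑ l, ‖M l k‖ := by
  simp only [trace, diag_apply, mul_apply, Finset.mul_sum]
  refine (norm_sum_le _ _).trans <| Finset.sum_le_sum fun k _ =>
    (norm_sum_le _ _).trans <| Finset.sum_le_sum fun l _ => ?_
  rw [norm_mul]
  exact mul_le_mul_of_nonneg_right (hρ.norm_apply_le_re_trace k l) (norm_nonneg _)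

end Matrix.PosSemidef

lemma Matrix.bddAbove_norm_trace_mul_of_trace_eq_one {n 𝕜 : Type*} [Fintype n] [RCLike 𝕜]
    (M : Matrix n n 𝕜) :
    BddAbove {x : ℝ | ∃ ρ : Matrix n n 𝕜, ρ.PosSemidef ∧ ρ.trace = 1 ∧ x = ‖(ρ * M).trace‖} := by
  refine ⟨∑ k, ∑ l, ‖M l k‖, ?_⟩
  rintro _ ⟨ρ, hρ, htr, rfl⟩
  simpa only [htr, RCLike.one_re, one_mul] using hρ.norm_trace_mul_le M

namespace OrthogonalIdempotents

variable {R S ι : Type*} [CommSemiring S] [Semiring R] [Algebra S R] [Fintype ι] {e : ι → R}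

lemma mul_sum_smul (he : OrthogonalIdempotents e) (c : ι → S) (i : ι) :
    e i * ∑ j, c j • e j = c i • e i := by
  classical
  simp [Finset.mul_sum, he.mul_eq]

lemma sum_smul_mul (he : OrthogonalIdempotents e) (c : ι → S) (i : ι) :
    (∑ j, c j • e j) * e i = c i • e i := by
  classical
  simp [Finset.sum_mul, he.mul_eq]

end OrthogonalIdempotents

namespace Matrix

variable {n ι R : Type*} [Fintype n] [Fintype ι]

def dephase [Semiring R] (P : ι → Matrix n n R) (ρ : Matrix n n R) : Matrix n n R :=
  ∑ i, P i * ρ * P i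

lemma PosSemidef.dephase [Ring R] [PartialOrder R] [StarRing R] [AddLeftMono R]
    {P : ι → Matrix n n R} (hP : ∀ i, (P i).IsHermitian) {ρ : Matrix n n R}
    (hρ : ρ.PosSemidef) : (dephase P ρ).PosSemidef :=
  posSemidef_sum _ fun i _ => by simpa only [(hP i).eq] using hρ.conjTranspose_mul_mul_same (P i)

lemma trace_dephase [CommSemiring R] [DecidableEq n] {P : ι → Matrix n n R}
    (hP : ∀ i, IsIdempotentElem (P i)) (hP_sum : ∑ i, P i = 1) (ρ : Matrix n n R) :
    (dephase P ρ).trace = ρ.trace := by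
  simp only [dephase, trace_sum, trace_mul_cycle (P _) ρ, (hP _).eq]
  rw [← trace_sum, ← Finset.sum_mul, hP_sum, one_mul]

variable [CommSemiring R] [DecidableEq n] {P : ι → Matrix n n R}

lemma commute_sum_smul_dephase (hP : OrthogonalIdempotents P) (c : ι → R) (ρ : Matrix n n R) :
    Commute (∑ i, c i • P i) (dephase P ρ) := by
  refine Commute.sum_right _ _ _ fun i _ => ?_
  simp only [Commute, SemiconjBy, ← mul_assoc, hP.sum_smul_mul, mul_assoc _ _ (∑ j, c j • P j),
    hP.mul_sum_smul, smul_mul_assoc, mul_smul_comm]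

lemma dephase_mul_sum_smul (hP : OrthogonalIdempotents P) (c : ι → R) (ρ : Matrix n n R) :
    dephase P ρ * ∑ i, c i • P i = ∑ i, c i • (P i * ρ * P i) := by
  simp only [dephase, Finset.sum_mul, mul_assoc _ (P _), hP.mul_sum_smul, mul_smul_comm]

lemma trace_dephase_mul_sum_smul_mul_sum_smul {κ : Type*} [Fintype κ] (hP : OrthogonalIdempotents P)
    (c : ι → R) (Q : κ → Matrix n n R) (d : κ → R) (ρ : Matrix n n R) :
    (dephase P ρ * (∑ i, c i • P i) * ∑ j, d j • Q j).trace =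
      ∑ i, ∑ j, (c i * d j) * (P i * ρ * P i * Q j).trace := by
  rw [dephase_mul_sum_smul hP, Finset.sum_mul, trace_sum]
  refine Finset.sum_congr rfl fun i _ => ?_
  simp only [Finset.mul_sum, trace_sum, smul_mul_assoc, mul_smul_comm, trace_smul, smul_eq_mul,
    mul_assoc, mul_left_comm (d _)]

lemma trace_mul_smul_add_smul_of_commute {σ A : Matrix n n R} (h : Commute A σ)
    (B : Matrix n n R) (c d : R) :
    (σ * (c • (A * B) + d • (B * A))).trace = (c + d) * (σ * A * B).trace := by
  have hBA : (σ * (B * A)).trace = (σ * A * B).trace := by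
    rw [← mul_assoc, trace_mul_cycle, h.eq]
  rw [mul_add, trace_add, mul_smul_comm, mul_smul_comm, trace_smul, trace_smul, hBA, ← mul_assoc]
  simp only [smul_eq_mul, add_mul]

end Matrix

lemma Real.sSup_le_sSup_of_forall_nonneg {s t : Set ℝ} (hst : s ⊆ t) (ht : BddAbove t)
    (ht₀ : ∀ x ∈ t, 0 ≤ x) : sSup s ≤ sSup t := by
  obtain rfl | hs := s.eq_empty_or_nonempty
  · exact Real.sSup_empty.trans_le (Real.sSup_nonneg ht₀)
  · exact csSup_le_csSup ht hs hst

theorem sup_operational_le_sup_algebraic_general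
    {m ι κ : Type*} [Fintype m] [DecidableEq m] [Fintype ι] [Fintype κ]
    (A B : Matrix m m ℂ) (α : ℝ)
    (a : ι → ℝ) (P : ι → Matrix m m ℂ)
    (b : κ → ℝ) (Q : κ → Matrix m m ℂ)
    (hP_herm : ∀ i, (P i).IsHermitian) (hP_idem : ∀ i, P i * P i = P i)
    (hP_orth : ∀ i j, i ≠ j → P i * P j = 0) (hP_sum : ∑ i, P i = 1)
    (hA : A = ∑ i, (a i : ℂ) • P i)
    (hB : B = ∑ j, (b j : ℂ) • Q j) :
    sSup {x : ℝ | ∃ ρ : Matrix m m ℂ, ρ.PosSemidef ∧ ρ.trace = 1 ∧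
        x = ‖∑ i, ∑ j, ((a i : ℂ) * (b j : ℂ)) * (P i * ρ * P i * Q j).trace‖}
      ≤
    sSup {x : ℝ | ∃ ρ : Matrix m m ℂ, ρ.PosSemidef ∧ ρ.trace = 1 ∧
        x = ‖(ρ * ((α : ℂ) • (A * B) + ((1 - α : ℝ) : ℂ) • (B * A))).trace‖} := by
  have hP : OrthogonalIdempotents P := ⟨hP_idem, fun i j => hP_orth i j⟩
  refine Real.sSup_le_sSup_of_forall_nonneg ?_ (bddAbove_norm_trace_mul_of_trace_eq_one _)
    (by rintro _ ⟨ρ, -, -, rfl⟩; positivity)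
  rintro _ ⟨ρ, hρ, htr, rfl⟩
  refine ⟨dephase P ρ, hρ.dephase hP_herm, (trace_dephase hP_idem hP_sum ρ).trans htr, ?_⟩
  subst hA hB
  rw [trace_mul_smul_add_smul_of_commute (commute_sum_smul_dephase hP _ ρ),
    trace_dephase_mul_sum_smul_mul_sum_smul hP, Complex.ofReal_sub, Complex.ofReal_one,
    add_sub_cancel, one_mul]

/-- The supremum over states of the absolute operational correlation is at most the supremum
over states of the absolute algebraic correlation `tr[ρ (α AB + (1−α) BA)]`. -/
theorem sup_operational_le_sup_algebraic
    {m ι κ : Type*} [Fintype m] [DecidableEq m] [Fintype ι] [Fintype κ]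
    (A B : Matrix m m ℂ) (α : ℝ)
    (a : ι → ℝ) (P : ι → Matrix m m ℂ)
    (b : κ → ℝ) (Q : κ → Matrix m m ℂ)
    (hP_herm : ∀ i, (P i).IsHermitian) (hP_idem : ∀ i, P i * P i = P i)
    (hP_orth : ∀ i j, i ≠ j → P i * P j = 0) (hP_sum : ∑ i, P i = 1)
    (hA : A = ∑ i, (a i : ℂ) • P i)
    (hQ_herm : ∀ j, (Q j).IsHermitian) (hQ_idem : ∀ j, Q j * Q j = Q j)
    (hQ_orth : ∀ j k, j ≠ k → Q j * Q k = 0) (hQ_sum : ∑ j, Q j = 1)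
    (hB : B = ∑ j, (b j : ℂ) • Q j) :
    sSup {x : ℝ | ∃ ρ : Matrix m m ℂ, ρ.PosSemidef ∧ ρ.trace = 1 ∧
        x = ‖∑ i, ∑ j, ((a i : ℂ) * (b j : ℂ)) * (P i * ρ * P i * Q j).trace‖}
      ≤
    sSup {x : ℝ | ∃ ρ : Matrix m m ℂ, ρ.PosSemidef ∧ ρ.trace = 1 ∧
        x = ‖(ρ * ((α : ℂ) • (A * B) + ((1 - α : ℝ) : ℂ) • (B * A))).trace‖} :=
  sup_operational_le_sup_algebraic_general A B α a P b Q hP_herm hP_idem hP_orth hP_sum hA hB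
end

section
/- For α ∈ [0,1], |tr[P_A(a) ρ P_A(a) P_B(b)] − tr[ρ (α P_A(a)P_B(b) + (1−α)P_B(b)P_A(a))]| ≤ ‖α P_A(a)P_B(b) + (1−α)P_B(b)P_A(a)‖ · ‖Λ_A(ρ) − ρ‖₁. -/
open Matrix Complex
open scoped ComplexOrder

noncomputable def opNorm {m : Type*} [Fintype m] [DecidableEq m] (X : Matrix m m ℂ) : ℝ :=
  ‖Matrix.toEuclideanCLM (𝕜 := ℂ) X‖

noncomputable def trNorm {m : Type*} [Fintype m] [DecidableEq m] (X : Matrix m m ℂ) : ℝ :=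
  (((Matrix.posSemidef_conjTranspose_mul_self X).1.eigenvectorUnitary.1 *
      diagonal (((↑) : ℝ → ℂ) ∘ (√·) ∘ (Matrix.posSemidef_conjTranspose_mul_self X).1.eigenvalues) *
      (star (Matrix.posSemidef_conjTranspose_mul_self X).1.eigenvectorUnitary : Matrix m m ℂ)).trace).re

/-!
Write `Λ = Λ_A(ρ)` and `X = α P_A(a) P_B(b) + (1 - α) P_B(b) P_A(a)`. Since `Λ` commutes with
`P_A(a)` and `P_A(a) Λ P_A(a) = P_A(a) ρ P_A(a)`, both `tr[Λ P_A(a) P_B(b)]` and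
`tr[Λ P_B(b) P_A(a)]` equal `tr[P_A(a) ρ P_A(a) P_B(b)]`, so the left-hand side is
`|tr[(Λ - ρ) X]|`. For the Hermitian matrix `Λ - ρ` with eigenpairs `(d_k, v_k)` this trace is
`∑ d_k ⟪v_k, X v_k⟫`, which is at most `‖X‖ ∑ |d_k| = ‖X‖ ‖Λ - ρ‖₁`.
-/

open scoped InnerProductSpace

section Spectral

variable {𝕜 m : Type*} [RCLike 𝕜] [Fintype m] [DecidableEq m]

theorem Matrix.trace_eq_sum_inner_toEuclideanLin {ι : Type*} [Fintype ι] (X : Matrix m m 𝕜)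
    (b : OrthonormalBasis ι 𝕜 (EuclideanSpace 𝕜 m)) :
    X.trace = ∑ k, ⟪b k, toEuclideanLin X (b k)⟫_𝕜 := by
  rw [← LinearMap.trace_eq_sum_inner, toEuclideanLin_eq_toLin_orthonormal, trace_toLin_eq]

theorem Matrix.IsHermitian.toEuclideanLin_eigenvectorBasis {Δ : Matrix m m 𝕜}
    (hΔ : Δ.IsHermitian) (k : m) :
    toEuclideanLin Δ (hΔ.eigenvectorBasis k) =
      (hΔ.eigenvalues k : 𝕜) • hΔ.eigenvectorBasis k := by
  apply WithLp.ofLp_injective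
  rw [ofLp_toLpLin, toLin'_apply, hΔ.mulVec_eigenvectorBasis, WithLp.ofLp_smul,
    RCLike.real_smul_eq_coe_smul (K := 𝕜)]

theorem Matrix.IsHermitian.trace_mul_eq_sum_eigenvalues_mul_inner {Δ : Matrix m m 𝕜}
    (hΔ : Δ.IsHermitian) (X : Matrix m m 𝕜) :
    (Δ * X).trace = ∑ k, (hΔ.eigenvalues k : 𝕜) *
      ⟪hΔ.eigenvectorBasis k, toEuclideanLin X (hΔ.eigenvectorBasis k)⟫_𝕜 := by
  rw [trace_mul_comm, trace_eq_sum_inner_toEuclideanLin _ hΔ.eigenvectorBasis]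
  refine Finset.sum_congr rfl fun k _ => ?_
  rw [toLpLin_mul_same, LinearMap.comp_apply, hΔ.toEuclideanLin_eigenvectorBasis, map_smul,
    inner_smul_right]

theorem Matrix.IsHermitian.trace_cfc {A : Matrix m m 𝕜} (hA : A.IsHermitian) (f : ℝ → ℝ) :
    (cfc f A).trace = ∑ k, (f (hA.eigenvalues k) : 𝕜) := by
  rw [hA.cfc_eq, IsHermitian.cfc, Unitary.conjStarAlgAut_apply, trace_mul_comm, ← mul_assoc,
    Unitary.coe_star_mul_self, one_mul, trace_diagonal]
  rfl

end Spectral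

section TraceDuality

variable {m : Type*} [Fintype m] [DecidableEq m]

theorem norm_inner_toEuclideanLin_le_opNorm (X : Matrix m m ℂ) {v : EuclideanSpace ℂ m}
    (hv : ‖v‖ = 1) : ‖⟪v, toEuclideanLin X v⟫_ℂ‖ ≤ opNorm X :=
  calc ‖⟪v, toEuclideanLin X v⟫_ℂ‖ ≤ ‖v‖ * ‖toEuclideanCLM (𝕜 := ℂ) X v‖ :=
        norm_inner_le_norm _ _
    _ ≤ ‖v‖ * (opNorm X * ‖v‖) := by
        gcongr
        exact (toEuclideanCLM (𝕜 := ℂ) X).le_opNorm v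
    _ = opNorm X := by rw [hv]; ring

theorem trNorm_eq_re_trace_cfc_sqrt (X : Matrix m m ℂ) :
    trNorm X = (cfc Real.sqrt (Xᴴ * X)).trace.re := by
  rw [(posSemidef_conjTranspose_mul_self X).1.cfc_eq]
  rfl

theorem Matrix.IsHermitian.trNorm_eq_sum_abs_eigenvalues {Δ : Matrix m m ℂ}
    (hΔ : Δ.IsHermitian) : trNorm Δ = ∑ k, |hΔ.eigenvalues k| := by
  have hsq : Δᴴ * Δ = cfc (fun x : ℝ => x ^ 2) Δ := by
    rw [cfc_pow_id Δ 2 hΔ.isSelfAdjoint, hΔ.eq, sq]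
  have habs : cfc Real.sqrt (Δᴴ * Δ) = cfc (fun x : ℝ => |x|) Δ := by
    rw [hsq, ← cfc_comp Real.sqrt (fun x : ℝ => x ^ 2) Δ hΔ.isSelfAdjoint]
    simp only [Function.comp_def, Real.sqrt_sq_eq_abs]
  rw [trNorm_eq_re_trace_cfc_sqrt, habs, hΔ.trace_cfc, ← RCLike.ofReal_sum]
  exact RCLike.ofReal_re (K := ℂ) _

theorem Matrix.IsHermitian.norm_trace_mul_le_opNorm_mul_trNorm {Δ : Matrix m m ℂ}
    (hΔ : Δ.IsHermitian) (X : Matrix m m ℂ) :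
    ‖(Δ * X).trace‖ ≤ opNorm X * trNorm Δ := by
  rw [hΔ.trace_mul_eq_sum_eigenvalues_mul_inner, hΔ.trNorm_eq_sum_abs_eigenvalues,
    Finset.mul_sum]
  refine (norm_sum_le _ _).trans (Finset.sum_le_sum fun k _ => ?_)
  rw [norm_mul, RCLike.norm_ofReal, mul_comm]
  gcongr
  exact norm_inner_toEuclideanLin_le_opNorm X (hΔ.eigenvectorBasis.orthonormal.1 k)

end TraceDuality

section Pinching

variable {ι : Type*} [Fintype ι]

def pinching {R : Type*} [NonUnitalNonAssocSemiring R] (P : ι → R) (ρ : R) : R :=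
  ∑ i, P i * ρ * P i

variable {R : Type*} [NonUnitalSemiring R] {P : ι → R}

theorem pinching_mul_of_orthogonal_idempotent (hP_idem : ∀ i, P i * P i = P i)
    (hP_orth : ∀ i i', i ≠ i' → P i * P i' = 0) (ρ : R) (i : ι) :
    pinching P ρ * P i = P i * ρ * P i := by
  rw [pinching, Finset.sum_mul, Finset.sum_eq_single_of_mem i (Finset.mem_univ i)]
  · rw [mul_assoc, hP_idem]
  · intro i' _ hne
    rw [mul_assoc, hP_orth i' i hne, mul_zero]

theorem mul_pinching_of_orthogonal_idempotent (hP_idem : ∀ i, P i * P i = P i)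
    (hP_orth : ∀ i i', i ≠ i' → P i * P i' = 0) (ρ : R) (i : ι) :
    P i * pinching P ρ = P i * ρ * P i := by
  rw [pinching, Finset.mul_sum, Finset.sum_eq_single_of_mem i (Finset.mem_univ i)]
  · rw [← mul_assoc, ← mul_assoc, hP_idem]
  · intro i' _ hne
    rw [← mul_assoc, ← mul_assoc, hP_orth i i' hne.symm, zero_mul, zero_mul]

theorem IsSelfAdjoint.pinching [StarRing R] (hP : ∀ i, IsSelfAdjoint (P i)) {ρ : R}
    (hρ : IsSelfAdjoint ρ) : IsSelfAdjoint (pinching P ρ) :=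
  isSelfAdjoint_sum _ fun i _ => by simpa only [(hP i).star_eq] using hρ.conjugate (P i)

end Pinching

theorem trace_pinching_mul_convex_combination {m ι R : Type*} [Fintype m] [Fintype ι]
    [CommRing R] {P : ι → Matrix m m R} (hP_idem : ∀ i, P i * P i = P i)
    (hP_orth : ∀ i i', i ≠ i' → P i * P i' = 0) (ρ Q : Matrix m m R) (i : ι) (α : R) :
    (pinching P ρ * (α • (P i * Q) + (1 - α) • (Q * P i))).trace =
      (P i * ρ * P i * Q).trace := by
  have hPQ : (pinching P ρ * (P i * Q)).trace = (P i * ρ * P i * Q).trace := by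
    rw [← mul_assoc, pinching_mul_of_orthogonal_idempotent hP_idem hP_orth]
  have hQP : (pinching P ρ * (Q * P i)).trace = (P i * ρ * P i * Q).trace := by
    rw [← mul_assoc, trace_mul_cycle, mul_pinching_of_orthogonal_idempotent hP_idem hP_orth]
  rw [mul_add, trace_add, Matrix.mul_smul, Matrix.mul_smul, trace_smul, trace_smul, hPQ, hQP,
    smul_eq_mul, smul_eq_mul, ← add_mul, add_sub_cancel, one_mul]

theorem operational_quasiprob_diff_le_product_invasiveness_general
    {m ι κ : Type*} [Fintype m] [DecidableEq m] [Fintype ι]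
    (ρ : Matrix m m ℂ) (α : ℝ)
    (P : ι → Matrix m m ℂ)
    (Q : κ → Matrix m m ℂ)
    (hP_herm : ∀ i, (P i).IsHermitian) (hP_idem : ∀ i, P i * P i = P i)
    (hP_orth : ∀ i i', i ≠ i' → P i * P i' = 0)
    (hρ : ρ.PosSemidef)
    (i : ι) (j : κ) :
    ‖(P i * ρ * P i * Q j).trace
        - (ρ * ((α : ℂ) • (P i * Q j) + ((1 - α : ℝ) : ℂ) • (Q j * P i))).trace‖
      ≤ opNorm ((α : ℂ) • (P i * Q j) + ((1 - α : ℝ) : ℂ) • (Q j * P i)) * trNorm ((∑ i', P i' * ρ * P i') - ρ) := by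
  rw [ofReal_sub, ofReal_one, ← trace_pinching_mul_convex_combination hP_idem hP_orth ρ (Q j) i,
    ← trace_sub, ← sub_mul]
  have hΔ : (pinching P ρ - ρ).IsHermitian :=
    ((IsSelfAdjoint.pinching fun i => (hP_herm i).isSelfAdjoint) hρ.1.isSelfAdjoint).sub hρ.1
  exact hΔ.norm_trace_mul_le_opNorm_mul_trNorm _

theorem operational_quasiprob_diff_le_product_invasiveness
    {m ι κ : Type*} [Fintype m] [DecidableEq m] [Fintype ι] [Fintype κ]
    (A B ρ : Matrix m m ℂ) (α : ℝ) (hα : α ∈ Set.Icc (0 : ℝ) 1)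
    (a : ι → ℝ) (P : ι → Matrix m m ℂ)
    (b : κ → ℝ) (Q : κ → Matrix m m ℂ)
    (hP_herm : ∀ i, (P i).IsHermitian) (hP_idem : ∀ i, P i * P i = P i)
    (hP_orth : ∀ i i', i ≠ i' → P i * P i' = 0) (hP_sum : ∑ i, P i = 1)
    (hA : A = ∑ i, (a i : ℂ) • P i)
    (hQ_herm : ∀ j, (Q j).IsHermitian) (hQ_idem : ∀ j, Q j * Q j = Q j)
    (hQ_orth : ∀ j j', j ≠ j' → Q j * Q j' = 0) (hQ_sum : ∑ j, Q j = 1)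
    (hB : B = ∑ j, (b j : ℂ) • Q j)
    (hρ : ρ.PosSemidef) (hρtr : ρ.trace = 1)
    (i : ι) (j : κ) :
    ‖(P i * ρ * P i * Q j).trace
        - (ρ * ((α : ℂ) • (P i * Q j) + ((1 - α : ℝ) : ℂ) • (Q j * P i))).trace‖
      ≤ opNorm ((α : ℂ) • (P i * Q j) + ((1 - α : ℝ) : ℂ) • (Q j * P i)) * trNorm ((∑ i', P i' * ρ * P i') - ρ) :=
  operational_quasiprob_diff_le_product_invasiveness_general ρ α P Q hP_herm hP_idem hP_orth hρ i j
end

section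
/- If A is a self-adjoint operator with spectrum {α, −α} for some α > 0 (a dichotomic observable), then for every operator B and every density operator ρ, the operational correlation equals the symmetrized algebraic correlation: ⟨A→B⟩_ρ^op = tr[ρ {A,B}/2], where {A,B} = AB + BA. -/
open Matrix Complex
open scoped ComplexOrder

/-! Writing `Pm = 1 - Pp`, the anticommutator of `ρ` with `Pp - Pm` is
`2 (Pp ρ Pp - Pm ρ Pm)`: the off-diagonal blocks `Pp ρ Pm`, `Pm ρ Pp` cancel, so measuring `A`
first does not change `tr[ρ {A, B}]`. Both sides are then traces against `B`, linear in `B`. -/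

theorem mul_sub_add_sub_mul_of_add_eq_one {R : Type*} [Ring R] {P Q : R} (h : P + Q = 1)
    (x : R) : x * (P - Q) + (P - Q) * x = 2 * (P * x * P - Q * x * Q) := by
  obtain rfl : Q = 1 - P := eq_sub_of_add_eq' h
  noncomm_ring

namespace Matrix

variable {n R : Type*} [Fintype n] [CommRing R]

theorem trace_mul_anticomm (ρ A B : Matrix n n R) :
    (ρ * (A * B + B * A)).trace = ((ρ * A + A * ρ) * B).trace := by
  rw [Matrix.mul_add, Matrix.add_mul, trace_add, trace_add, Matrix.mul_assoc,
    trace_mul_comm ρ (B * A), Matrix.mul_assoc, trace_mul_comm B]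

theorem sum_mul_trace_mul {ι : Type*} [Fintype ι] (c : R) (b : ι → R) (X : Matrix n n R)
    (Q : ι → Matrix n n R) :
    ∑ j, c * b j * (X * Q j).trace = c * (X * ∑ j, b j • Q j).trace := by
  simp only [trace_sum, Matrix.mul_smul, trace_smul, smul_eq_mul,
    Finset.mul_sum, mul_assoc]

end Matrix

theorem dichotomic_operational_eq_symmetrized_general
    {m κ : Type*} [Fintype m] [DecidableEq m] [Fintype κ]
    (A B ρ : Matrix m m ℂ) (α : ℝ)
    (Pp Pm : Matrix m m ℂ)
    (h_sum : Pp + Pm = 1)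
    (hA : A = (α : ℂ) • Pp + ((-α : ℝ) : ℂ) • Pm)
    (b : κ → ℝ) (Q : κ → Matrix m m ℂ)
    (hB : B = ∑ j, (b j : ℂ) • Q j) :
    (∑ j, ((α : ℂ) * (b j : ℂ)) * (Pp * ρ * Pp * Q j).trace)
      + (∑ j, (((-α : ℝ) : ℂ) * (b j : ℂ)) * (Pm * ρ * Pm * Q j).trace)
      = (ρ * (A * B + B * A)).trace / 2 := by
  have hanti : ρ * A + A * ρ = (2 * α : ℂ) • (Pp * ρ * Pp - Pm * ρ * Pm) := by
    have hA' : A = (α : ℂ) • (Pp - Pm) := by rw [hA]; push_cast; module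
    rw [hA', mul_smul_comm, smul_mul_assoc, ← smul_add,
      mul_sub_add_sub_mul_of_add_eq_one h_sum, two_mul]
    module
  rw [sum_mul_trace_mul, sum_mul_trace_mul, ← hB, trace_mul_anticomm, hanti, Matrix.smul_mul,
    trace_smul, Matrix.sub_mul, trace_sub]
  push_cast
  ring

/-- For a dichotomic observable `A` with spectrum `{α, −α}` (`α > 0`), the operational
correlation with any self-adjoint `B` equals the symmetrized algebraic correlation
`tr[ρ {A,B}/2]`. -/
theorem dichotomic_operational_eq_symmetrized
    {m κ : Type*} [Fintype m] [DecidableEq m] [Fintype κ]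
    (A B ρ : Matrix m m ℂ) (α : ℝ) (hα : 0 < α)
    (Pp Pm : Matrix m m ℂ)
    (hPp_herm : Pp.IsHermitian) (hPm_herm : Pm.IsHermitian)
    (hPp_idem : Pp * Pp = Pp) (hPm_idem : Pm * Pm = Pm)
    (h_orth : Pp * Pm = 0) (h_sum : Pp + Pm = 1)
    (hPp_ne : Pp ≠ 0) (hPm_ne : Pm ≠ 0)
    (hA : A = (α : ℂ) • Pp + ((-α : ℝ) : ℂ) • Pm)
    (b : κ → ℝ) (Q : κ → Matrix m m ℂ)
    (hQ_herm : ∀ j, (Q j).IsHermitian) (hQ_idem : ∀ j, Q j * Q j = Q j)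
    (hQ_orth : ∀ j k, j ≠ k → Q j * Q k = 0) (hQ_sum : ∑ j, Q j = 1)
    (hB : B = ∑ j, (b j : ℂ) • Q j)
    (hρ : ρ.PosSemidef) (hρtr : ρ.trace = 1) :
    (∑ j, ((α : ℂ) * (b j : ℂ)) * (Pp * ρ * Pp * Q j).trace)
      + (∑ j, (((-α : ℝ) : ℂ) * (b j : ℂ)) * (Pm * ρ * Pm * Q j).trace)
      = (ρ * (A * B + B * A)).trace / 2 :=
  dichotomic_operational_eq_symmetrized_general A B ρ α Pp Pm h_sum hA b Q hB
end

section
/- Suppose A is a self-adjoint operator, not a scalar multiple of the identity, such that for every self-adjoint B with spectrum {+1,−1} and every density operator ρ, the operational correlation equals the symmetrized algebraic correlation: ⟨A→B⟩_ρ^op = tr[ρ {A,B}/2]. Then A has exactly two eigenvalues α and −α for some α > 0. -/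
/-!
Take unit vectors `u`, `v` in the ranges of two different spectral projections `P i`, `P j`,
the `±1`-valued observable `B` that exchanges `u` and `v` and is the identity on their orthogonal
complement, and the pure state `ρ = |ψ⟩⟨ψ|/2` with `ψ = u + v`. Every compression `P k B P k`
kills `ψ`, so the operational correlation vanishes, while `{A, B} ψ = (a i + a j) ψ`, so the
symmetrized correlation is `(a i + a j)/2`. Hence any two distinct eigenvalues sum to zero, which
together with `A` being non-scalar leaves exactly two of them, `α` and `-α`.
-/

open Matrix Complex
open scoped ComplexOrder

namespace Matrix

section Swap

variable {n R : Type*} [DecidableEq n] [CommRing R] [StarRing R]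

def swapReflection (u v : n → R) : Matrix n n R :=
  1 - vecMulVec u (star u) - vecMulVec v (star v) + vecMulVec u (star v) + vecMulVec v (star u)

lemma swapReflection_comm (u v : n → R) : swapReflection u v = swapReflection v u := by
  simp only [swapReflection]
  abel

lemma isHermitian_swapReflection (u v : n → R) : (swapReflection u v).IsHermitian := by
  simp only [IsHermitian, swapReflection, conjTranspose_add, conjTranspose_sub,
    conjTranspose_one, conjTranspose_vecMulVec, star_star]
  abel

variable [Fintype n] {u v : n → R} (hu : star u ⬝ᵥ u = 1) (hv : star v ⬝ᵥ v = 1)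
  (huv : star u ⬝ᵥ v = 0)
include hu hv huv

omit hv in
lemma swapReflection_mulVec_left : swapReflection u v *ᵥ u = v := by
  have hvu : star v ⬝ᵥ u = 0 := by rw [star_dotProduct, huv, star_zero]
  simp only [swapReflection, add_mulVec, sub_mulVec, one_mulVec, vecMulVec_mulVec, hu, hvu,
    MulOpposite.op_one, MulOpposite.op_zero, one_smul, zero_smul]
  abel

omit hu in
lemma swapReflection_mulVec_right : swapReflection u v *ᵥ v = u := by
  rw [swapReflection_comm]
  exact swapReflection_mulVec_left hv (by rw [star_dotProduct, huv, star_zero])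

lemma swapReflection_mul_self : swapReflection u v * swapReflection u v = 1 := by
  have hvu : star v ⬝ᵥ u = 0 := by rw [star_dotProduct, huv, star_zero]
  simp only [swapReflection, add_mul, mul_add, sub_mul, mul_sub, one_mul, mul_one,
    vecMulVec_mul_vecMulVec, hu, hv, huv, hvu, one_smul, zero_smul, vecMulVec_zero]
  abel

omit hv in
lemma swapReflection_ne_one [Nontrivial R] : swapReflection u v ≠ 1 := by
  intro h
  have : v = u := by rw [← swapReflection_mulVec_left hu huv, h, one_mulVec]
  rw [this, hu] at huv
  exact one_ne_zero huv

omit hv in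
lemma swapReflection_ne_neg_one [Nontrivial R] : swapReflection u v ≠ -1 := by
  intro h
  have : v = -u := by rw [← swapReflection_mulVec_left hu huv, h, neg_mulVec, one_mulVec]
  rw [this, dotProduct_neg, hu, neg_eq_zero] at huv
  exact one_ne_zero huv

end Swap

section Projections

variable {n R : Type*} [Fintype n] [CommRing R] [StarRing R]

lemma star_dotProduct_eq_zero_of_mul_eq_zero {P Q : Matrix n n R} (hP : P.IsHermitian)
    (hPQ : P * Q = 0) {x y : n → R} (hx : P *ᵥ x = x) (hy : Q *ᵥ y = y) : star x ⬝ᵥ y = 0 := by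
  rw [← hx, ← hy, star_mulVec, ← dotProduct_mulVec, hP.eq, mulVec_mulVec, hPQ, zero_mulVec,
    dotProduct_zero]

lemma exists_mulVec_eq_self_of_mul_self_eq {Q : Matrix n n ℂ} (hQ : Q * Q = Q) (hQ0 : Q ≠ 0) :
    ∃ u, Q *ᵥ u = u ∧ star u ⬝ᵥ u = 1 := by
  obtain ⟨w, hw⟩ : ∃ w, Q *ᵥ w ≠ 0 := by
    by_contra! h
    exact hQ0 (ext_iff_mulVec.2 fun w => by rw [h w, zero_mulVec])
  set x := Q *ᵥ w
  obtain ⟨hre, him⟩ := Complex.pos_iff.1 (dotProduct_star_self_pos_iff.2 hw)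
  set c : ℝ := (Real.sqrt (star x ⬝ᵥ x).re)⁻¹
  refine ⟨(c : ℂ) • x, by rw [mulVec_smul, mulVec_mulVec, hQ], ?_⟩
  have hc : c * c * (star x ⬝ᵥ x).re = 1 := by
    rw [← mul_inv, Real.mul_self_sqrt hre.le, inv_mul_cancel₀ hre.ne']
  have hx : star x ⬝ᵥ x = ((star x ⬝ᵥ x).re : ℂ) := Complex.ext rfl him.symm
  rw [star_smul, smul_dotProduct, dotProduct_smul, smul_smul, Complex.star_def,
    Complex.conj_ofReal, hx, smul_eq_mul]
  exact_mod_cast hc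

end Projections

section OrthogonalFamily

variable {n ι R : Type*} [Fintype n] [CommRing R] {P : ι → Matrix n n R}
  (hP_orth : ∀ i j, i ≠ j → P i * P j = 0) {i : ι} {u : n → R} (hu : P i *ᵥ u = u)
include hP_orth hu

lemma mulVec_eq_zero_of_ne {k : ι} (hki : k ≠ i) : P k *ᵥ u = 0 := by
  rw [← hu, mulVec_mulVec, hP_orth k i hki, zero_mulVec]

lemma sum_smul_mulVec_of_mulVec_eq_self [Fintype ι] (a : ι → R) :
    (∑ k, a k • P k) *ᵥ u = a i • u := by
  rw [sum_mulVec, Finset.sum_eq_single_of_mem i (Finset.mem_univ i)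
    fun k _ hki => by rw [smul_mulVec, mulVec_eq_zero_of_ne hP_orth hu hki, smul_zero],
    smul_mulVec, hu]

lemma mulVec_mulVec_mulVec_eq_zero {j : ι} (hij : i ≠ j) {B : Matrix n n R}
    (hBu : P j *ᵥ (B *ᵥ u) = B *ᵥ u) (k : ι) : P k *ᵥ (B *ᵥ (P k *ᵥ u)) = 0 := by
  obtain rfl | hki := eq_or_ne k i
  · rw [hu, ← hBu, mulVec_mulVec, hP_orth k j hij, zero_mulVec]
  · rw [mulVec_eq_zero_of_ne hP_orth hu hki, mulVec_zero, mulVec_zero]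

end OrthogonalFamily

lemma trace_smul_vecMulVec_mul_of_mulVec_eq_smul {n R : Type*} [Fintype n] [CommRing R]
    (c : R) (ψ w : n → R) {M : Matrix n n R} {μ : R} (h : M *ᵥ ψ = μ • ψ) :
    (c • vecMulVec ψ w * M).trace = μ * (c • vecMulVec ψ w).trace := by
  rw [trace_mul_comm, Matrix.mul_smul, mul_vecMulVec, h, smul_vecMulVec, smul_comm, trace_smul,
    smul_eq_mul]

end Matrix

theorem add_eq_zero_of_opCorr_eq_symmCorr {m ι : Type*} [Fintype m] [DecidableEq m] [Fintype ι]
    (a : ι → ℝ) (P : ι → Matrix m m ℂ)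
    (hP_herm : ∀ i, (P i).IsHermitian) (hP_idem : ∀ i, P i * P i = P i)
    (hP_orth : ∀ i j, i ≠ j → P i * P j = 0) (hP_ne : ∀ i, P i ≠ 0)
    (hyp : ∀ B : Matrix m m ℂ, B.IsHermitian → B * B = 1 → B ≠ 1 → B ≠ -1 →
      ∀ ρ : Matrix m m ℂ, ρ.PosSemidef → ρ.trace = 1 →
        (∑ i, (a i : ℂ) * (P i * ρ * P i * B).trace) =
          (ρ * ((∑ i, (a i : ℂ) • P i) * B + B * ∑ i, (a i : ℂ) • P i)).trace / 2)
    {i j : ι} (hij : i ≠ j) : a i + a j = 0 := by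
  obtain ⟨u, hPu, hu⟩ := exists_mulVec_eq_self_of_mul_self_eq (hP_idem i) (hP_ne i)
  obtain ⟨v, hPv, hv⟩ := exists_mulVec_eq_self_of_mul_self_eq (hP_idem j) (hP_ne j)
  have huv := star_dotProduct_eq_zero_of_mul_eq_zero (hP_herm i) (hP_orth i j hij) hPu hPv
  have hvu : star v ⬝ᵥ u = 0 := by rw [star_dotProduct, huv, star_zero]
  set B := swapReflection u v
  have hBu : B *ᵥ u = v := swapReflection_mulVec_left hu huv
  have hBv : B *ᵥ v = u := swapReflection_mulVec_right hv huv
  set ψ := u + v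
  set ρ : Matrix m m ℂ := (2⁻¹ : ℂ) • vecMulVec ψ (star ψ)
  have hρ_tr : ρ.trace = 1 := by
    rw [trace_smul, trace_vecMulVec, dotProduct_comm, star_add, add_dotProduct, dotProduct_add,
      dotProduct_add, hu, hv, huv, hvu, smul_eq_mul]
    norm_num
  have hcompress (k : ι) : (P k * B * P k) *ᵥ ψ = 0 := by
    rw [← mulVec_mulVec, ← mulVec_mulVec, mulVec_add, mulVec_add, mulVec_add,
      mulVec_mulVec_mulVec_eq_zero hP_orth hPu hij (by rw [hBu, hPv]),
      mulVec_mulVec_mulVec_eq_zero hP_orth hPv hij.symm (by rw [hBv, hPu]), add_zero]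
  have hsymm : ((∑ k, (a k : ℂ) • P k) * B + B * ∑ k, (a k : ℂ) • P k) *ᵥ ψ =
      ((a i + a j : ℝ) : ℂ) • ψ := by
    simp only [ψ, add_mulVec, ← mulVec_mulVec, mulVec_add, hBu, hBv,
      sum_smul_mulVec_of_mulVec_eq_self hP_orth hPu, sum_smul_mulVec_of_mulVec_eq_self hP_orth hPv,
      mulVec_smul]
    push_cast
    module
  have h := hyp B (isHermitian_swapReflection u v) (swapReflection_mul_self hu hv huv)
    (swapReflection_ne_one hu huv) (swapReflection_ne_neg_one hu huv) ρ
    ((posSemidef_vecMulVec_self_star ψ).smul (inv_nonneg.2 zero_le_two)) hρ_tr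
  have hterm (k : ι) : (P k * ρ * P k * B).trace = 0 := by
    have : (P k * ρ * P k * B).trace = (ρ * (P k * B * P k)).trace := by
      simp only [Matrix.mul_assoc]
      rw [trace_mul_comm]
      simp only [Matrix.mul_assoc]
    rw [this, trace_smul_vecMulVec_mul_of_mulVec_eq_smul _ _ _ (μ := 0)
      (by rw [hcompress k, zero_smul]), zero_mul]
  rw [trace_smul_vecMulVec_mul_of_mulVec_eq_smul _ _ _ hsymm, hρ_tr] at h
  simp only [hterm, mul_zero, Finset.sum_const_zero, mul_one] at h
  exact_mod_cast (div_eq_zero_iff.1 h.symm).resolve_right two_ne_zero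

lemma nontrivial_of_forall_sum_smul_ne_smul {ι R M : Type*} [Fintype ι] [Semiring R]
    [AddCommMonoid M] [Module R M] {x : ι → M} {e : M} (hx : ∑ i, x i = e) (a : ι → R)
    (h : ∀ c : R, ∑ i, a i • x i ≠ c • e) : Nontrivial ι := by
  by_contra hι
  rw [not_nontrivial_iff_subsingleton] at hι
  cases isEmpty_or_nonempty ι with
  | inl => exact h 0 (by simp)
  | inr hne =>
    obtain ⟨i⟩ := hne
    exact h (a i) (by rw [← hx, Fintype.sum_subsingleton _ i, Fintype.sum_subsingleton _ i])

lemma exists_pos_eq_neg_of_forall_add_eq_zero {ι : Type*} [Nontrivial ι] {a : ι → ℝ}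
    (ha : Function.Injective a) (h : ∀ i j, i ≠ j → a i + a j = 0) :
    ∃ α : ℝ, 0 < α ∧ ∃ i j : ι, i ≠ j ∧ a i = α ∧ a j = -α ∧ ∀ k : ι, k = i ∨ k = j := by
  have hcover {i j : ι} (hij : i ≠ j) (k : ι) : k = i ∨ k = j := by
    by_contra! hk
    exact hk.2 (ha (by linarith [h i k hk.1.symm, h i j hij]))
  obtain ⟨i, j, hij⟩ := exists_pair_ne ι
  have hj : a j = -a i := by linarith [h i j hij]
  rcases lt_or_gt_of_ne (fun h0 : a i = 0 => hij (ha (by rw [hj, h0, neg_zero])))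
    with hneg | hpos
  · exact ⟨a j, by linarith, j, i, hij.symm, rfl, by linarith, fun k => (hcover hij k).symm⟩
  · exact ⟨a i, hpos, i, j, hij, rfl, hj, hcover hij⟩

theorem equality_implies_dichotomic_general
    {m ι : Type*} [Fintype m] [DecidableEq m] [Fintype ι]
    (A : Matrix m m ℂ)
    (a : ι → ℝ) (P : ι → Matrix m m ℂ)
    (hP_herm : ∀ i, (P i).IsHermitian) (hP_idem : ∀ i, P i * P i = P i)
    (hP_orth : ∀ i j, i ≠ j → P i * P j = 0) (hP_sum : ∑ i, P i = 1)
    (hP_ne : ∀ i, P i ≠ 0) (ha_inj : Function.Injective a)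
    (hA : A = ∑ i, (a i : ℂ) • P i)
    (hA_nonscalar : ∀ c : ℂ, A ≠ c • (1 : Matrix m m ℂ))
    (hyp : ∀ B : Matrix m m ℂ, B.IsHermitian → B * B = 1 → B ≠ 1 → B ≠ -1 →
      ∀ ρ : Matrix m m ℂ, ρ.PosSemidef → ρ.trace = 1 →
        (∑ i, (a i : ℂ) * (P i * ρ * P i * B).trace) = (ρ * (A * B + B * A)).trace / 2) :
    ∃ α : ℝ, 0 < α ∧ ∃ i j : ι, i ≠ j ∧ a i = α ∧ a j = -α ∧ ∀ k : ι, k = i ∨ k = j := by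
  subst hA
  have : Nontrivial ι := nontrivial_of_forall_sum_smul_ne_smul hP_sum _ hA_nonscalar
  exact exists_pos_eq_neg_of_forall_add_eq_zero ha_inj fun i j hij =>
    add_eq_zero_of_opCorr_eq_symmCorr a P hP_herm hP_idem hP_orth hP_ne hyp hij

/-- If `A` is a non-scalar self-adjoint operator such that the operational correlation with
every `±1`-valued observable `B` equals the symmetrized algebraic correlation `tr[ρ{A,B}/2]`
for every state `ρ`, then `A` has exactly two eigenvalues `α` and `−α` for some `α > 0`.
Here a `±1`-valued observable is a Hermitian `B` with `B² = 1`, `B ≠ ±1`, whose spectral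
projections are `(1 ± B)/2`, so that the operational correlation
`Σ_{a,b} ab tr[P_A(a) ρ P_A(a) P_B(b)]` equals `Σ_a a tr[P_A(a) ρ P_A(a) B]`. -/
theorem equality_implies_dichotomic
    {m ι : Type*} [Fintype m] [DecidableEq m] [Fintype ι] [DecidableEq ι]
    (A : Matrix m m ℂ)
    (a : ι → ℝ) (P : ι → Matrix m m ℂ)
    (hP_herm : ∀ i, (P i).IsHermitian) (hP_idem : ∀ i, P i * P i = P i)
    (hP_orth : ∀ i j, i ≠ j → P i * P j = 0) (hP_sum : ∑ i, P i = 1)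
    (hP_ne : ∀ i, P i ≠ 0) (ha_inj : Function.Injective a)
    (hA : A = ∑ i, (a i : ℂ) • P i)
    (hA_nonscalar : ∀ c : ℂ, A ≠ c • (1 : Matrix m m ℂ))
    (hyp : ∀ B : Matrix m m ℂ, B.IsHermitian → B * B = 1 → B ≠ 1 → B ≠ -1 →
      ∀ ρ : Matrix m m ℂ, ρ.PosSemidef → ρ.trace = 1 →
        (∑ i, (a i : ℂ) * (P i * ρ * P i * B).trace) = (ρ * (A * B + B * A)).trace / 2) :
    ∃ α : ℝ, 0 < α ∧ ∃ i j : ι, i ≠ j ∧ a i = α ∧ a j = -α ∧ ∀ k : ι, k = i ∨ k = j :=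
  equality_implies_dichotomic_general A a P hP_herm hP_idem hP_orth hP_sum hP_ne ha_inj hA
    hA_nonscalar hyp
end

section
/- For any measurable bounded function f of the eigenvalues of A (equivalently, any operator of the form f(A)), the disturbance of f(A) by the Lüders measurement of B bounds from below the total-variation distance between the two orderings of operational joint probabilities: Σ_{a,b} |tr[P_A(a) ρ P_A(a) P_B(b)] − tr[P_B(b) ρ P_B(b) P_A(a)]| ≥ |tr[(Λ_B(ρ) − ρ) f(A)]| / ‖f(A)‖ for all f with f(A) ≠ 0. -/
open Matrix Complex
open scoped ComplexOrder

/-!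
Write `F = ∑ᵢ fᵢ Pᵢ` and `dᵢⱼ = tr[Pᵢ ρ Pᵢ Qⱼ] - tr[Qⱼ ρ Qⱼ Pᵢ]`. Since `∑ⱼ Qⱼ = 1` and `Pᵢ` is
idempotent, `∑ⱼ tr[Pᵢ ρ Pᵢ Qⱼ] = tr[ρ Pᵢ]`, so `tr[(Λ(ρ) - ρ) Pᵢ] = -∑ⱼ dᵢⱼ` and
`tr[(Λ(ρ) - ρ) F] = -∑ᵢ fᵢ ∑ⱼ dᵢⱼ`. Every `fᵢ` with `Pᵢ ≠ 0` is an eigenvalue of `F`, hence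
`|fᵢ| ≤ ‖F‖`, and the triangle inequality gives `|tr[(Λ(ρ) - ρ) F]| ≤ ‖F‖ ∑ᵢⱼ |dᵢⱼ|`.
-/

lemma ContinuousLinearMap.norm_le_opNorm_of_apply_eq_smul {𝕜 E : Type*} [NontriviallyNormedField 𝕜]
    [NormedAddCommGroup E] [NormedSpace 𝕜 E] (T : E →L[𝕜] E) {c : 𝕜} {v : E}
    (hv : v ≠ 0) (hTv : T v = c • v) : ‖c‖ ≤ ‖T‖ := by
  have hle : ‖c‖ * ‖v‖ ≤ ‖T‖ * ‖v‖ := by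
    rw [← norm_smul, ← hTv]
    exact T.le_opNorm v
  exact le_of_mul_le_mul_right hle (norm_pos_iff.mpr hv)

namespace Matrix

variable {m ι κ : Type*} [Fintype m] [Fintype ι] [Fintype κ]

lemma norm_le_opNorm_of_mul_eq_smul [DecidableEq m] {X P : Matrix m m ℂ} {c : ℂ}
    (hXP : X * P = c • P) (hP : P ≠ 0) : ‖c‖ ≤ opNorm X := by
  obtain ⟨x, hx⟩ : ∃ x, P *ᵥ x ≠ 0 := by
    by_contra! h
    exact hP (Matrix.ext_of_mulVec_single fun k => by rw [h, zero_mulVec])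
  refine (toEuclideanCLM (𝕜 := ℂ) X).norm_le_opNorm_of_apply_eq_smul
    (v := WithLp.toLp 2 (P *ᵥ x)) (by simpa using hx) ?_
  rw [toEuclideanCLM_toLp, mulVec_mulVec, hXP, smul_mulVec, WithLp.toLp_smul]

lemma sum_smul_mul_of_orthogonal {P : ι → Matrix m m ℂ} (f : ι → ℂ)
    (hP_idem : ∀ i, P i * P i = P i) (hP_orth : ∀ i j, i ≠ j → P i * P j = 0) (i : ι) :
    (∑ k, f k • P k) * P i = f i • P i := by
  rw [Finset.sum_mul, Finset.sum_eq_single i]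
  · rw [smul_mul_assoc, hP_idem i]
  · intro k _ hk
    rw [smul_mul_assoc, hP_orth k i hk, smul_zero]
  · exact fun h => absurd (Finset.mem_univ i) h

lemma trace_mul_sum_smul (X : Matrix m m ℂ) (P : ι → Matrix m m ℂ) (f : ι → ℂ) :
    (X * ∑ i, f i • P i).trace = ∑ i, f i * (X * P i).trace := by
  simp only [Matrix.mul_sum, Matrix.trace_sum, Matrix.mul_smul, Matrix.trace_smul, smul_eq_mul]

lemma trace_luders_sub_mul [DecidableEq m] (ρ : Matrix m m ℂ) {P : Matrix m m ℂ}
    {Q : κ → Matrix m m ℂ} (hP : P * P = P) (hQ_sum : ∑ j, Q j = 1) :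
    (((∑ j, Q j * ρ * Q j) - ρ) * P).trace
      = ∑ j, ((Q j * ρ * Q j * P).trace - (P * ρ * P * Q j).trace) := by
  have hρP : ∑ j, (P * ρ * P * Q j).trace = (ρ * P).trace := by
    rw [← Matrix.trace_sum, ← Matrix.mul_sum, hQ_sum, mul_one, Matrix.trace_mul_cycle, hP,
      Matrix.trace_mul_comm]
  rw [Finset.sum_sub_distrib, hρP, Matrix.sub_mul, Matrix.trace_sub, Finset.sum_mul,
    Matrix.trace_sum]

end Matrix

theorem TV_ge_disturbance_general
    {m ι κ : Type*} [Fintype m] [DecidableEq m] [Fintype ι] [Fintype κ]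
    (ρ : Matrix m m ℂ)
    (P : ι → Matrix m m ℂ)
    (Q : κ → Matrix m m ℂ)
    (hP_idem : ∀ i, P i * P i = P i)
    (hP_orth : ∀ i j, i ≠ j → P i * P j = 0)
    (hQ_sum : ∑ j, Q j = 1)
    (f : ι → ℂ) :
    (∑ i, ∑ j, ‖(P i * ρ * P i * Q j).trace - (Q j * ρ * Q j * P i).trace‖)
      ≥ ‖(((∑ j, Q j * ρ * Q j) - ρ) * (∑ i, f i • P i)).trace‖
          / opNorm (∑ i, f i • P i) := by
  set N := opNorm (∑ i, f i • P i)
  set Δ := (∑ j, Q j * ρ * Q j) - ρ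
  have hN : 0 ≤ N := norm_nonneg _
  have hcoef : ∀ i, ‖f i * (Δ * P i).trace‖ ≤ N * ‖(Δ * P i).trace‖ := fun i => by
    rcases eq_or_ne (P i) 0 with hPi | hPi
    · simp [hPi]
    · rw [norm_mul]
      gcongr
      exact norm_le_opNorm_of_mul_eq_smul (sum_smul_mul_of_orthogonal f hP_idem hP_orth i) hPi
  refine div_le_of_le_mul₀ hN (by positivity) ?_
  calc ‖(Δ * ∑ i, f i • P i).trace‖
      = ‖∑ i, f i * (Δ * P i).trace‖ := by rw [trace_mul_sum_smul]
    _ ≤ ∑ i, N * ‖(Δ * P i).trace‖ := (norm_sum_le _ _).trans (Finset.sum_le_sum fun i _ => hcoef i)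
    _ ≤ ∑ i, N * ∑ j, ‖(Q j * ρ * Q j * P i).trace - (P i * ρ * P i * Q j).trace‖ := by
        refine Finset.sum_le_sum fun i _ => mul_le_mul_of_nonneg_left ?_ hN
        rw [trace_luders_sub_mul ρ (hP_idem i) hQ_sum]
        exact norm_sum_le _ _
    _ = (∑ i, ∑ j, ‖(P i * ρ * P i * Q j).trace - (Q j * ρ * Q j * P i).trace‖) * N := by
        simp only [← Finset.sum_mul, norm_sub_rev, mul_comm N]

/-- The total-variation distance between the two orderings of operational joint probabilities
is bounded below by the normalized disturbance of any function `f(A)` of `A` caused by the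
Lüders measurement of `B`. -/
theorem TV_ge_disturbance
    {m ι κ : Type*} [Fintype m] [DecidableEq m] [Fintype ι] [Fintype κ]
    (A B ρ : Matrix m m ℂ)
    (a : ι → ℝ) (P : ι → Matrix m m ℂ)
    (b : κ → ℝ) (Q : κ → Matrix m m ℂ)
    (hP_herm : ∀ i, (P i).IsHermitian) (hP_idem : ∀ i, P i * P i = P i)
    (hP_orth : ∀ i j, i ≠ j → P i * P j = 0) (hP_sum : ∑ i, P i = 1)
    (hA : A = ∑ i, (a i : ℂ) • P i)
    (hQ_herm : ∀ j, (Q j).IsHermitian) (hQ_idem : ∀ j, Q j * Q j = Q j)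
    (hQ_orth : ∀ j k, j ≠ k → Q j * Q k = 0) (hQ_sum : ∑ j, Q j = 1)
    (hB : B = ∑ j, (b j : ℂ) • Q j)
    (hρ : ρ.PosSemidef) (hρtr : ρ.trace = 1)
    (f : ι → ℂ) (hf : (∑ i, f i • P i) ≠ 0) :
    (∑ i, ∑ j, ‖(P i * ρ * P i * Q j).trace - (Q j * ρ * Q j * P i).trace‖)
      ≥ ‖(((∑ j, Q j * ρ * Q j) - ρ) * (∑ i, f i • P i)).trace‖
          / opNorm (∑ i, f i • P i) :=
  TV_ge_disturbance_general ρ P Q hP_idem hP_orth hQ_sum f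
end

section
/- In the qubit system, the total-variation distance between the two orderings of sequential measurement probabilities for A = σ_z and B = σ_θ = cos θ σ_z + sin θ σ_x equals max{|sin θ · ⟨σ_x⟩_ρ|, |sin θ · (−sin θ ⟨σ_z⟩_ρ + cos θ ⟨σ_x⟩_ρ)|}, where the total variation distance is Σ_{s,t∈{±1}} |tr[P_{z,s}ρP_{z,s}P_{θ,t}] − tr[P_{θ,t}ρP_{θ,t}P_{z,s}]|. -/
/-!
Cycling the trace, the difference of the two orderings is `⟨PQP - QPQ⟩_ρ` for the projectors
`P = P_{z,s}`, `Q = P_{θ,t}`. On a qubit, `PQP - QPQ = -(sin θ / 4) (t σ_x + s σ_{θ+π/2})`, so with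
`u = sin θ ⟨σ_x⟩_ρ` and `v = sin θ ⟨σ_{θ+π/2}⟩_ρ` (real, as `ρ` is Hermitian) each term is
`|t u + s v| / 4`. Summing over the signs gives `(|u + v| + |u - v|) / 2 = max |u| |v|`.
-/

open Matrix Complex
open scoped ComplexOrder

noncomputable def σx : Matrix (Fin 2) (Fin 2) ℂ := !![0, 1; 1, 0]
noncomputable def σz : Matrix (Fin 2) (Fin 2) ℂ := !![1, 0; 0, -1]

noncomputable def σθ (θ : ℝ) : Matrix (Fin 2) (Fin 2) ℂ :=
  (Real.cos θ : ℂ) • σz + (Real.sin θ : ℂ) • σx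

noncomputable def Pz (s : ℝ) : Matrix (Fin 2) (Fin 2) ℂ := (2 : ℂ)⁻¹ • (1 + (s : ℂ) • σz)

noncomputable def Pθ (θ t : ℝ) : Matrix (Fin 2) (Fin 2) ℂ := (2 : ℂ)⁻¹ • (1 + (t : ℂ) • σθ θ)

/-- Difference of the two orderings of sequential measurement probabilities. -/
noncomputable def d (θ : ℝ) (ρ : Matrix (Fin 2) (Fin 2) ℂ) (s t : ℝ) : ℝ :=
  ‖(Pz s * ρ * Pz s * Pθ θ t).trace - (Pθ θ t * ρ * Pθ θ t * Pz s).trace‖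

theorem Matrix.trace_mul_mul_mul_sub_trace_mul_mul_mul {n R : Type*} [Fintype n] [CommRing R]
    (P Q ρ : Matrix n n R) :
    (P * ρ * P * Q).trace - (Q * ρ * Q * P).trace = (ρ * (P * Q * P - Q * P * Q)).trace := by
  simp only [Matrix.mul_sub, trace_sub, Matrix.mul_assoc]
  rw [trace_mul_comm P, trace_mul_comm Q]
  simp only [Matrix.mul_assoc]

lemma Pz_mul_Pθ_mul_Pz_sub {θ s t : ℝ} (hs : s ^ 2 = 1) (ht : t ^ 2 = 1) :
    Pz s * Pθ θ t * Pz s - Pθ θ t * Pz s * Pθ θ t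
      = -(4 : ℂ)⁻¹ • (Real.sin θ : ℂ) •
          ((t : ℂ) • σx + (s : ℂ) • ((Real.cos θ : ℂ) • σx - (Real.sin θ : ℂ) • σz)) := by
  have hs' : (s : ℂ) ^ 2 = 1 := by exact_mod_cast hs
  have ht' : (t : ℂ) ^ 2 = 1 := by exact_mod_cast ht
  have hp := Complex.sin_sq_add_cos_sq (θ : ℂ)
  ext i j; fin_cases i <;> fin_cases j <;>
    simp [Pz, Pθ, σθ, σx, σz, Matrix.mul_apply, Fin.sum_univ_two, Matrix.one_apply] <;> grind

theorem Matrix.IsHermitian.ofReal_re_trace_mul {n : Type*} [Fintype n] {A B : Matrix n n ℂ}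
    (hA : A.IsHermitian) (hB : B.IsHermitian) : ((A * B).trace.re : ℂ) = (A * B).trace := by
  rw [← conj_eq_iff_re, ← star_def, ← trace_conjTranspose, conjTranspose_mul, hA.eq, hB.eq,
    trace_mul_comm]

lemma isHermitian_σx : σx.IsHermitian := by
  ext i j; fin_cases i <;> fin_cases j <;> simp [σx]

lemma isHermitian_σz : σz.IsHermitian := by
  ext i j; fin_cases i <;> fin_cases j <;> simp [σz]

lemma d_eq_abs {θ : ℝ} {ρ : Matrix (Fin 2) (Fin 2) ℂ} (hρ : ρ.IsHermitian) {s t : ℝ}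
    (hs : s ^ 2 = 1) (ht : t ^ 2 = 1) :
    d θ ρ s t = |t * (Real.sin θ * ((ρ * σx).trace).re)
        + s * (Real.sin θ * (-(Real.sin θ) * ((ρ * σz).trace).re
          + Real.cos θ * ((ρ * σx).trace).re))| / 4 := by
  rw [d, trace_mul_mul_mul_sub_trace_mul_mul_mul, Pz_mul_Pθ_mul_Pz_sub hs ht]
  simp only [Matrix.mul_smul, Matrix.mul_add, Matrix.mul_sub, trace_smul, trace_add, trace_sub,
    smul_eq_mul]
  rw [← hρ.ofReal_re_trace_mul isHermitian_σx, ← hρ.ofReal_re_trace_mul isHermitian_σz,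
    ← Complex.ofReal_ofNat, ← Complex.ofReal_inv, ← Complex.ofReal_neg]
  norm_cast
  rw [Real.norm_eq_abs, neg_mul, abs_neg, abs_mul, abs_inv, Nat.abs_ofNat, inv_mul_eq_div]
  congr 2
  ring

lemma abs_add_add_abs_sub (u v : ℝ) : |u + v| + |u - v| = 2 * max |u| |v| := by
  rcases le_total |u| |v| with h | h <;> grind

theorem qubit_TV_distance_general (θ : ℝ) (ρ : Matrix (Fin 2) (Fin 2) ℂ)
    (hρ : ρ.PosSemidef) :
    d θ ρ 1 1 + d θ ρ 1 (-1) + d θ ρ (-1) 1 + d θ ρ (-1) (-1)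
      = max |Real.sin θ * ((ρ * σx).trace).re|
          |Real.sin θ * (-(Real.sin θ) * ((ρ * σz).trace).re
              + Real.cos θ * ((ρ * σx).trace).re)| := by
  have hρ' := hρ.isHermitian
  rw [d_eq_abs hρ' (one_pow 2) (one_pow 2), d_eq_abs hρ' (one_pow 2) neg_one_sq,
    d_eq_abs hρ' neg_one_sq (one_pow 2), d_eq_abs hρ' neg_one_sq neg_one_sq]
  generalize Real.sin θ * ((ρ * σx).trace).re = u
  generalize Real.sin θ * (-(Real.sin θ) * ((ρ * σz).trace).re
    + Real.cos θ * ((ρ * σx).trace).re) = v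
  simp only [one_mul, neg_one_mul, ← sub_eq_add_neg, neg_add_eq_sub, abs_sub_comm v u]
  linarith [abs_add_add_abs_sub u v, show |-u - v| = |u + v| by rw [← neg_add', abs_neg]]

/-- The total-variation distance between the two orderings of sequential measurement
probabilities for `σ_z` and `σ_θ` on a qubit. -/
theorem qubit_TV_distance (θ : ℝ) (ρ : Matrix (Fin 2) (Fin 2) ℂ)
    (hρ : ρ.PosSemidef) (hρtr : ρ.trace = 1) :
    d θ ρ 1 1 + d θ ρ 1 (-1) + d θ ρ (-1) 1 + d θ ρ (-1) (-1)
      = max |Real.sin θ * ((ρ * σx).trace).re|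
          |Real.sin θ * (-(Real.sin θ) * ((ρ * σz).trace).re
              + Real.cos θ * ((ρ * σx).trace).re)| :=
  qubit_TV_distance_general θ ρ hρ
end
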